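/- Catoni-style heavy-tailed supermartingale: define φ : ℝ → ℝ by φ(x) = log(1 + x + x²/2) for x ≥ 0 and φ(x) = −log(1 − x + x²/2) for x < 0. Let (X_t)_{t≥1} be an adapted real-valued process such that for every t, X_t and X_t² are conditionally integrable, E[X_t | 𝓕_{t−1}] = μ a.s. and E[(X_t − μ)² | 𝓕_{t−1}] ≤ σ² a.s. Then for every fixed λ ∈ ℝ, L_t := exp( Σ_{i=1}^t φ(λ(X_i − μ)) − t·λ²σ²/2 ), with L_0 := 1, is a test supermartingale with respect to (𝓕_t). -/

import Mathlib

/-!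
Since `exp ∘ catoniPhi` lies below the quadratic `1 + x + x²/2` on both branches, a conditional
mean-zero increment `Y` with conditional second moment at most `v` satisfies
`E[exp (catoniPhi (λ Y)) | 𝓕] ≤ 1 + λ²v/2 ≤ exp (λ²v/2)`. Hence `L` is a running product of
nonnegative factors each of conditional mean at most one. The only delicate point is
integrability of that product, which is obtained by truncating the predictable factor and
monotone convergence.
-/

open MeasureTheory Filter
open scoped ENNReal

/-- Catoni's influence function: `φ(x) = log(1 + x + x²/2)` for `x ≥ 0` and
`φ(x) = -log(1 - x + x²/2)` for `x < 0`. -/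
noncomputable def catoniPhi (x : ℝ) : ℝ :=
  if 0 ≤ x then Real.log (1 + x + x^2/2) else -Real.log (1 - x + x^2/2)

open scoped Topology

lemma measurable_catoniPhi : Measurable catoniPhi :=
  Measurable.ite measurableSet_Ici (Real.measurable_log.comp (by fun_prop))
    (Real.measurable_log.comp (by fun_prop)).neg

lemma exp_catoniPhi_le (x : ℝ) : Real.exp (catoniPhi x) ≤ 1 + x + x ^ 2 / 2 := by
  have hpos : 0 < 1 + x + x ^ 2 / 2 := by nlinarith [sq_nonneg (x + 1)]
  have hneg : 0 < 1 - x + x ^ 2 / 2 := by nlinarith [sq_nonneg (x - 1)]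
  unfold catoniPhi
  split_ifs
  · rw [Real.exp_log hpos]
  · rw [Real.exp_neg, Real.exp_log hneg, inv_eq_one_div, div_le_iff₀ hneg]
    nlinarith [sq_nonneg (x ^ 2)]

lemma integrable_of_tendsto_of_monotone {Ω : Type*} {m0 : MeasurableSpace Ω} {P : Measure Ω}
    {F : ℕ → Ω → ℝ} {f : Ω → ℝ} {K : ℝ} (hF : ∀ n, Integrable (F n) P)
    (hF0 : ∀ n ω, 0 ≤ F n ω) (hmono : ∀ ω, Monotone (F · ω))
    (hlim : ∀ ω, Tendsto (F · ω) atTop (𝓝 (f ω))) (hK : ∀ n, ∫ ω, F n ω ∂P ≤ K) :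
    Integrable f P := by
  have hf0 : ∀ ω, 0 ≤ f ω := fun ω => ge_of_tendsto' (hlim ω) fun n => hF0 n ω
  refine ⟨aestronglyMeasurable_of_tendsto_ae _ (fun n => (hF n).1) (ae_of_all _ hlim), ?_⟩
  rw [hasFiniteIntegral_iff_ofReal (ae_of_all _ hf0)]
  have hlint := lintegral_tendsto_of_tendsto_of_monotone
    (fun n => (hF n).1.aemeasurable.ennreal_ofReal)
    (ae_of_all _ fun ω _ _ hab => ENNReal.ofReal_le_ofReal (hmono ω hab))
    (ae_of_all _ fun ω => (ENNReal.continuous_ofReal.tendsto _).comp (hlim ω))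
  refine (le_of_tendsto' hlint fun n => ?_).trans_lt (ENNReal.ofReal_lt_top (r := K))
  rw [← ofReal_integral_eq_lintegral_ofReal (hF n) (ae_of_all _ (hF0 n))]
  exact ENNReal.ofReal_le_ofReal (hK n)

section CondExp

variable {Ω : Type*} {m m0 : MeasurableSpace Ω} {P : Measure Ω} [IsFiniteMeasure P]

lemma integral_mul_le_of_condExp_le (hm : m ≤ m0) {f g : Ω → ℝ} {C : ℝ}
    (hf : StronglyMeasurable[m] f) (hf0 : ∀ ω, 0 ≤ f ω) (hfi : Integrable f P)
    (hg : Integrable g P) (hfg : Integrable (fun ω => f ω * g ω) P)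
    (hgC : P[g|m] ≤ᵐ[P] fun _ => C) :
    ∫ ω, f ω * g ω ∂P ≤ C * ∫ ω, f ω ∂P := by
  have hpull : P[fun ω => f ω * g ω|m] =ᵐ[P] f * P[g|m] :=
    condExp_mul_of_stronglyMeasurable_left hf hfg hg
  calc ∫ ω, f ω * g ω ∂P = ∫ ω, (f * P[g|m]) ω ∂P :=
        (integral_condExp hm).symm.trans (integral_congr_ae hpull)
    _ ≤ ∫ ω, C * f ω ∂P := by
        refine integral_mono_ae (integrable_condExp.congr hpull) (hfi.const_mul C) ?_
        filter_upwards [hgC] with ω hω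
        simpa [mul_comm C] using mul_le_mul_of_nonneg_left hω (hf0 ω)
    _ = C * ∫ ω, f ω ∂P := integral_const_mul _ _

lemma integrable_mul_of_condExp_le (hm : m ≤ m0) {f g : Ω → ℝ} {C : ℝ} (hC : 0 ≤ C)
    (hf : StronglyMeasurable[m] f) (hf0 : ∀ ω, 0 ≤ f ω) (hfi : Integrable f P)
    (hg0 : ∀ ω, 0 ≤ g ω) (hg : Integrable g P) (hgC : P[g|m] ≤ᵐ[P] fun _ => C) :
    Integrable (fun ω => f ω * g ω) P := by
  set fn : ℕ → Ω → ℝ := fun n ω => min (f ω) n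
  have hfn : ∀ n, StronglyMeasurable[m] (fn n) := fun n =>
    (continuous_id.min continuous_const).comp_stronglyMeasurable hf
  have hfn0 : ∀ n ω, 0 ≤ fn n ω := fun n ω => le_min (hf0 ω) n.cast_nonneg
  have hfn_le : ∀ n ω, fn n ω ≤ f ω := fun n ω => min_le_left _ _
  have hfng : ∀ n, Integrable (fun ω => fn n ω * g ω) P := fun n =>
    hg.bdd_mul (c := n) ((hfn n).mono hm).aestronglyMeasurable
      (ae_of_all _ fun ω => (abs_of_nonneg (hfn0 n ω)).trans_le (min_le_right _ _))
  have hfni : ∀ n, Integrable (fn n) P := fun n =>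
    hfi.mono ((hfn n).mono hm).aestronglyMeasurable (ae_of_all _ fun ω => by
      simpa [abs_of_nonneg (hfn0 n ω), abs_of_nonneg (hf0 ω)] using hfn_le n ω)
  refine integrable_of_tendsto_of_monotone (K := C * ∫ ω, f ω ∂P) hfng
    (fun n ω => mul_nonneg (hfn0 n ω) (hg0 ω))
    (fun ω _ _ hab => mul_le_mul_of_nonneg_right (min_le_min le_rfl (Nat.cast_le.2 hab)) (hg0 ω))
    (fun ω => tendsto_atTop_of_eventually_const (i₀ := ⌈f ω⌉₊) fun n hn => ?_) fun n => ?_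
  · rw [show fn n ω = f ω from min_eq_left ((Nat.le_ceil _).trans (Nat.cast_le.2 hn))]
  · exact (integral_mul_le_of_condExp_le hm (hfn n) (hfn0 n) (hfni n) hg (hfng n) hgC).trans
      (mul_le_mul_of_nonneg_left (integral_mono (hfni n) hfi (hfn_le n)) hC)

lemma condExp_sub_const_ae_eq_zero (hm : m ≤ m0) {X : Ω → ℝ} {μ : ℝ} (hX : Integrable X P)
    (hmean : P[X|m] =ᵐ[P] fun _ => μ) : P[fun ω => X ω - μ|m] =ᵐ[P] 0 := by
  have hsub : P[fun ω => X ω - μ|m] =ᵐ[P] P[X|m] - P[fun _ => μ|m] :=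
    condExp_sub hX (integrable_const μ) m
  filter_upwards [hsub, hmean] with ω hsub hmean
  rw [hsub, Pi.sub_apply, hmean, condExp_const hm, sub_self, Pi.zero_apply]

lemma MeasureTheory.MemLp.integrable_one_add_add_sq_div_two {Y : Ω → ℝ} (hY : MemLp Y 2 P)
    (lam : ℝ) :
    Integrable (fun ω => 1 + lam * Y ω + (lam * Y ω) ^ 2 / 2) P := by
  simp_rw [mul_pow, mul_div_right_comm]
  exact ((integrable_const 1).add ((hY.integrable one_le_two).const_mul lam)).add
    (hY.integrable_sq.const_mul _)

lemma integrable_exp_catoniPhi {Y : Ω → ℝ} (hY : MemLp Y 2 P) (lam : ℝ) :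
    Integrable (fun ω => Real.exp (catoniPhi (lam * Y ω))) P := by
  refine (hY.integrable_one_add_add_sq_div_two lam).mono' ?_ (ae_of_all _ fun ω => ?_)
  · exact (Real.measurable_exp.comp measurable_catoniPhi).comp_aemeasurable
      ((hY.aestronglyMeasurable.aemeasurable).const_mul lam) |>.aestronglyMeasurable
  · rw [Real.norm_of_nonneg (Real.exp_pos _).le]
    exact exp_catoniPhi_le _

lemma condExp_exp_catoniPhi_le (hm : m ≤ m0) {Y : Ω → ℝ} {v : ℝ} (hY : MemLp Y 2 P)
    (hmean : P[Y|m] =ᵐ[P] 0) (hvar : P[fun ω => Y ω ^ 2|m] ≤ᵐ[P] fun _ => v) (lam : ℝ) :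
    P[fun ω => Real.exp (catoniPhi (lam * Y ω))|m] ≤ᵐ[P] fun _ => 1 + lam ^ 2 * v / 2 := by
  have hY1 : Integrable Y P := hY.integrable one_le_two
  have hquad : (fun ω => 1 + lam * Y ω + (lam * Y ω) ^ 2 / 2) =
      (fun _ => (1 : ℝ)) + (lam • Y + (lam ^ 2 / 2) • fun ω => Y ω ^ 2) := by
    ext ω
    simp only [Pi.add_apply, Pi.smul_apply, smul_eq_mul]
    ring
  have hquad_condExp : P[fun ω => 1 + lam * Y ω + (lam * Y ω) ^ 2 / 2|m] =ᵐ[P]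
      (fun _ => (1 : ℝ)) + (lam • P[Y|m] + (lam ^ 2 / 2) • P[fun ω => Y ω ^ 2|m]) := by
    rw [hquad]
    refine (condExp_add (integrable_const _)
      ((hY1.smul _).add (hY.integrable_sq.smul _)) m).trans ?_
    rw [condExp_const hm]
    exact EventuallyEq.rfl.add ((condExp_add (hY1.smul _) (hY.integrable_sq.smul _) m).trans
      ((condExp_smul _ _ _).add (condExp_smul _ _ _)))
  have hle := condExp_mono (m := m) (integrable_exp_catoniPhi hY lam)
    (hY.integrable_one_add_add_sq_div_two lam) (ae_of_all _ fun ω => exp_catoniPhi_le (lam * Y ω))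
  filter_upwards [hle, hquad_condExp, hmean, hvar] with ω hle hquad hmean hvar
  simp only [hquad, hmean, Pi.add_apply, Pi.smul_apply, Pi.zero_apply, smul_eq_mul] at hle
  nlinarith [sq_nonneg lam]

lemma condExp_exp_catoniPhi_sub_le_one (hm : m ≤ m0) {Y : Ω → ℝ} {v : ℝ} (hY : MemLp Y 2 P)
    (hmean : P[Y|m] =ᵐ[P] 0) (hvar : P[fun ω => Y ω ^ 2|m] ≤ᵐ[P] fun _ => v) (lam : ℝ) :
    P[fun ω => Real.exp (catoniPhi (lam * Y ω) - lam ^ 2 * v / 2)|m] ≤ᵐ[P] fun _ => 1 := by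
  set c := lam ^ 2 * v / 2
  have hfactor : (fun ω => Real.exp (catoniPhi (lam * Y ω) - c)) =
      Real.exp (-c) • fun ω => Real.exp (catoniPhi (lam * Y ω)) := by
    ext ω
    rw [Pi.smul_apply, smul_eq_mul, ← Real.exp_add, neg_add_eq_sub]
  filter_upwards [condExp_smul (Real.exp (-c)) (fun ω => Real.exp (catoniPhi (lam * Y ω))) m,
    condExp_exp_catoniPhi_le hm hY hmean hvar lam] with ω hsmul hle
  rw [hfactor, hsmul, Pi.smul_apply, smul_eq_mul]
  calc Real.exp (-c) * P[fun ω => Real.exp (catoniPhi (lam * Y ω))|m] ω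
      ≤ Real.exp (-c) * (1 + c) := mul_le_mul_of_nonneg_left hle (Real.exp_pos _).le
    _ ≤ Real.exp (-c) * Real.exp c := by
        gcongr
        linarith [Real.add_one_le_exp c]
    _ = 1 := by rw [← Real.exp_add, neg_add_cancel, Real.exp_zero]

lemma supermartingale_of_mul_condExp_le_one {ℱ : Filtration ℕ m0} {L G : ℕ → Ω → ℝ}
    (hL : StronglyAdapted ℱ L) (hL0 : Integrable (L 0) P) (hLnn : ∀ t ω, 0 ≤ L t ω)
    (hLG : ∀ t, L (t + 1) = L t * G (t + 1)) (hGnn : ∀ t ω, 0 ≤ G (t + 1) ω)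
    (hG : ∀ t, Integrable (G (t + 1)) P) (hGle : ∀ t, P[G (t + 1)|ℱ t] ≤ᵐ[P] fun _ => 1) :
    Supermartingale L ℱ P := by
  have hint : ∀ t, Integrable (L t) P := by
    intro t
    induction t with
    | zero => exact hL0
    | succ t ih =>
      rw [hLG t]
      exact integrable_mul_of_condExp_le (ℱ.le t) zero_le_one (hL t) (hLnn t) ih (hGnn t) (hG t)
        (hGle t)
  refine supermartingale_nat hL hint fun t => ?_
  have hpull : P[L (t + 1)|ℱ t] =ᵐ[P] L t * P[G (t + 1)|ℱ t] := by
    rw [hLG t]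
    exact condExp_mul_of_stronglyMeasurable_left (hL t) (hLG t ▸ hint (t + 1)) (hG t)
  filter_upwards [hpull, hGle t] with ω hpull hle
  rw [hpull, Pi.mul_apply]
  exact mul_le_of_le_one_right (hLnn t ω) hle

end CondExp

theorem catoni_heavy_tailed_supermartingale_general
    {Ω : Type*} {m0 : MeasurableSpace Ω} {P : Measure Ω} [IsProbabilityMeasure P]
    {ℱ : Filtration ℕ m0}
    (X : ℕ → Ω → ℝ) (hX : ∀ t, 1 ≤ t → StronglyMeasurable[ℱ t] (X t))
    (μ σ : ℝ)
    (hint2 : ∀ t, 1 ≤ t → Integrable (fun ω => (X t ω)^2) P)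
    (hmean : ∀ t, 1 ≤ t → P[X t|ℱ (t-1)] =ᵐ[P] fun _ => μ)
    (hvar : ∀ t, 1 ≤ t → P[fun ω => (X t ω - μ)^2|ℱ (t-1)] ≤ᵐ[P] fun _ => σ^2)
    (lam : ℝ) (L : ℕ → Ω → ℝ)
    (hL : ∀ t ω, L t ω = Real.exp
        ((∑ i ∈ Finset.Icc 1 t, catoniPhi (lam * (X i ω - μ)))
          - (t : ℝ) * lam^2 * σ^2 / 2)) :
    Supermartingale L ℱ P ∧ (∀ t ω, 0 ≤ L t ω) ∧ (∀ ω, L 0 ω = 1) := by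
  set G : ℕ → Ω → ℝ := fun s ω => Real.exp (catoniPhi (lam * (X s ω - μ)) - lam ^ 2 * σ ^ 2 / 2)
  have hLnn : ∀ t ω, 0 ≤ L t ω := fun t ω => by rw [hL]; positivity
  have hL0 : ∀ ω, L 0 ω = 1 := fun ω => by simp [hL]
  have hsucc : ∀ t : ℕ, 1 ≤ t + 1 := fun t => Nat.le_add_left 1 t
  have hX2 : ∀ t, MemLp (X (t + 1)) 2 P := fun t =>
    (memLp_two_iff_integrable_sq ((hX _ (hsucc t)).mono (ℱ.le _)).aestronglyMeasurable).2
      (hint2 _ (hsucc t))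
  have hY : ∀ t, MemLp (fun ω => X (t + 1) ω - μ) 2 P := fun t => (hX2 t).sub (memLp_const μ)
  have hLG : ∀ t, L (t + 1) = L t * G (t + 1) := fun t => by
    ext ω
    rw [Pi.mul_apply, hL, hL, ← Real.exp_add, Finset.sum_Icc_succ_top (hsucc t)]
    push_cast
    congr 1
    ring
  have hadapted : StronglyAdapted ℱ L := fun t => by
    rw [show L t = _ from funext (hL t)]
    refine (Real.measurable_exp.comp (Measurable.sub (Finset.measurable_sum _ fun i hi => ?_)
      measurable_const)).stronglyMeasurable
    obtain ⟨hi1, hit⟩ := Finset.mem_Icc.mp hi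
    exact measurable_catoniPhi.comp
      ((((hX i hi1).mono (ℱ.mono hit)).measurable.sub_const μ).const_mul lam)
  have hG : ∀ t, Integrable (G (t + 1)) P := fun t => by
    simp_rw [G, Real.exp_sub]
    exact (integrable_exp_catoniPhi (hY t) lam).div_const _
  have hGle : ∀ t, P[G (t + 1)|ℱ t] ≤ᵐ[P] fun _ => 1 := fun t =>
    condExp_exp_catoniPhi_sub_le_one (ℱ.le t) (hY t)
      (condExp_sub_const_ae_eq_zero (ℱ.le t) ((hX2 t).integrable one_le_two)
        (by simpa using hmean (t + 1) (hsucc t)))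
      (by simpa using hvar (t + 1) (hsucc t)) lam
  have hL0int : Integrable (L 0) P := (integrable_const 1).congr (ae_of_all _ fun ω => (hL0 ω).symm)
  exact ⟨supermartingale_of_mul_condExp_le_one hadapted hL0int hLnn hLG
    (fun t ω => (Real.exp_pos _).le) hG hGle, hLnn, hL0⟩

/-- **Catoni-style heavy-tailed supermartingale**: if each `X t` (for `t ≥ 1`) has
conditional mean `μ` and conditional variance at most `σ²` given `ℱ (t-1)`, then
for every fixed `λ`, `L t = exp (∑_{i=1}^t φ(λ(X i - μ)) - t λ² σ² / 2)` is a
test supermartingale. -/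
theorem catoni_heavy_tailed_supermartingale
    {Ω : Type*} {m0 : MeasurableSpace Ω} {P : Measure Ω} [IsProbabilityMeasure P]
    {ℱ : Filtration ℕ m0}
    (X : ℕ → Ω → ℝ) (hX : ∀ t, 1 ≤ t → StronglyMeasurable[ℱ t] (X t))
    (μ σ : ℝ) (hσ : 0 < σ)
    (hint1 : ∀ t, 1 ≤ t → Integrable (X t) P)
    (hint2 : ∀ t, 1 ≤ t → Integrable (fun ω => (X t ω)^2) P)
    (hmean : ∀ t, 1 ≤ t → P[X t|ℱ (t-1)] =ᵐ[P] fun _ => μ)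
    (hvar : ∀ t, 1 ≤ t → P[fun ω => (X t ω - μ)^2|ℱ (t-1)] ≤ᵐ[P] fun _ => σ^2)
    (lam : ℝ) (L : ℕ → Ω → ℝ)
    (hL : ∀ t ω, L t ω = Real.exp
        ((∑ i ∈ Finset.Icc 1 t, catoniPhi (lam * (X i ω - μ)))
          - (t : ℝ) * lam^2 * σ^2 / 2)) :
    Supermartingale L ℱ P ∧ (∀ t ω, 0 ≤ L t ω) ∧ (∀ ω, L 0 ω = 1) :=
  catoni_heavy_tailed_supermartingale_general X hX μ σ hint2 hmean hvar lam L hL
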